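/- arXiv:1801.00589 — 6 statements merged into one kernel-verified Lean document; each statement's English description precedes it below -/
import Mathlib

section
/- (Proposition, Section 5: first-order recurrence) In the Section-5 setup below, for all i, j ∈ ℤ the m×m matrix of 1-forms d̄Φ_{i,j} satisfies d̄Φ_{i,j} = dΦ_{i,j+1} − (dΦ_{i,0}) Φ_{0,j} and d̄Φ_{i,j} = dΦ_{i+1,j} + Φ_{i,0} (dΦ_{0,j}). -/
/-- A bidifferential calculus: a unital graded associative algebra
`Ω = ⊕_{r≥0} Ω^r` over a field `𝕂`, together with two `𝕂`-linear graded
derivations `d`, `dbar` of degree one satisfying `d² = d̄² = d d̄ + d̄ d = 0`. -/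
structure BidiffCalculus (𝕂 : Type) [Field 𝕂] (Ω : Type) [Ring Ω] [Algebra 𝕂 Ω] where
  grade : ℕ → Submodule 𝕂 Ω
  internal : DirectSum.IsInternal grade
  one_mem : (1 : Ω) ∈ grade 0
  mul_mem : ∀ (r s : ℕ), ∀ a ∈ grade r, ∀ b ∈ grade s, a * b ∈ grade (r + s)
  d : Ω →ₗ[𝕂] Ω
  dbar : Ω →ₗ[𝕂] Ω
  d_grade : ∀ (r : ℕ), ∀ a ∈ grade r, d a ∈ grade (r + 1)
  dbar_grade : ∀ (r : ℕ), ∀ a ∈ grade r, dbar a ∈ grade (r + 1)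
  d_leibniz : ∀ (r : ℕ), ∀ a ∈ grade r, ∀ b : Ω,
      d (a * b) = d a * b + ((-1 : ℤ) ^ r) • (a * d b)
  dbar_leibniz : ∀ (r : ℕ), ∀ a ∈ grade r, ∀ b : Ω,
      dbar (a * b) = dbar a * b + ((-1 : ℤ) ^ r) • (a * dbar b)
  d_d : ∀ a : Ω, d (d a) = 0
  dbar_dbar : ∀ a : Ω, dbar (dbar a) = 0
  d_dbar_anticomm : ∀ a : Ω, d (dbar a) + dbar (d a) = 0

namespace BidiffCalculus

variable {𝕂 : Type} [Field 𝕂] {Ω : Type} [Ring Ω] [Algebra 𝕂 Ω]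

/-- Entrywise action of `d` on matrices over `Ω`. -/
def matD (S : BidiffCalculus 𝕂 Ω) {m n : ℕ} (M : Matrix (Fin m) (Fin n) Ω) :
    Matrix (Fin m) (Fin n) Ω := M.map S.d

/-- Entrywise action of `dbar` on matrices over `Ω`. -/
def matDbar (S : BidiffCalculus 𝕂 Ω) {m n : ℕ} (M : Matrix (Fin m) (Fin n) Ω) :
    Matrix (Fin m) (Fin n) Ω := M.map S.dbar

/-- A matrix has all entries of degree `r`. -/
def MatIn (S : BidiffCalculus 𝕂 Ω) (r : ℕ) {m n : ℕ} (M : Matrix (Fin m) (Fin n) Ω) : Prop :=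
  ∀ i j, M i j ∈ S.grade r

end BidiffCalculus

/-- `Φ_{i,j} = θ Δ^i Ω̂^{-1} Γ^j η`, with negative powers given by powers of inverses. -/
def Phi {R : Type} [Ring R] {m n : ℕ} (θ : Matrix (Fin m) (Fin n) R)
    (η : Matrix (Fin n) (Fin m) R) (Δ Γ W : (Matrix (Fin n) (Fin n) R)ˣ) (i j : ℤ) :
    Matrix (Fin m) (Fin m) R :=
  θ * Units.val (Δ ^ i) * Units.val W⁻¹ * Units.val (Γ ^ j) * η

namespace BidiffCalculus

variable {𝕂 : Type} [Field 𝕂] {Ω : Type} [Ring Ω] [Algebra 𝕂 Ω] (S : BidiffCalculus 𝕂 Ω)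

lemma d_one' : S.d 1 = 0 := by
  have h := S.d_leibniz 0 1 S.one_mem 1
  simp only [one_mul, pow_zero, one_smul, mul_one] at h
  nth_rewrite 1 [← add_zero (S.d 1)] at h
  exact (add_left_cancel h).symm

lemma dbar_one' : S.dbar 1 = 0 := by
  have h := S.dbar_leibniz 0 1 S.one_mem 1
  simp only [one_mul, pow_zero, one_smul, mul_one] at h
  nth_rewrite 1 [← add_zero (S.dbar 1)] at h
  exact (add_left_cancel h).symm

lemma matD_one {n : ℕ} : S.matD (1 : Matrix (Fin n) (Fin n) Ω) = 0 := by
  ext i j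
  simp [matD, Matrix.map_apply, Matrix.one_apply, apply_ite S.d, d_one']

lemma matDbar_one {n : ℕ} : S.matDbar (1 : Matrix (Fin n) (Fin n) Ω) = 0 := by
  ext i j
  simp [matDbar, Matrix.map_apply, Matrix.one_apply, apply_ite S.dbar, dbar_one']

lemma matD_sub {p q : ℕ} (M N : Matrix (Fin p) (Fin q) Ω) :
    S.matD (M - N) = S.matD M - S.matD N := by
  ext i j
  simp [matD, Matrix.map_apply, Matrix.sub_apply]

lemma matD_mul {p q r : ℕ} {M : Matrix (Fin p) (Fin q) Ω} (hM : S.MatIn 0 M)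
    (N : Matrix (Fin q) (Fin r) Ω) :
    S.matD (M * N) = S.matD M * N + M * S.matD N := by
  ext i j
  simp only [matD, Matrix.map_apply, Matrix.mul_apply, Matrix.add_apply, map_sum]
  rw [← Finset.sum_add_distrib]
  refine Finset.sum_congr rfl fun k _ => ?_
  rw [S.d_leibniz 0 _ (hM i k)]
  simp

lemma matDbar_mul {p q r : ℕ} {M : Matrix (Fin p) (Fin q) Ω} (hM : S.MatIn 0 M)
    (N : Matrix (Fin q) (Fin r) Ω) :
    S.matDbar (M * N) = S.matDbar M * N + M * S.matDbar N := by
  ext i j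
  simp only [matDbar, Matrix.map_apply, Matrix.mul_apply, Matrix.add_apply, map_sum]
  rw [← Finset.sum_add_distrib]
  refine Finset.sum_congr rfl fun k _ => ?_
  rw [S.dbar_leibniz 0 _ (hM i k)]
  simp

lemma matIn_mul {p q r : ℕ} {M : Matrix (Fin p) (Fin q) Ω} {N : Matrix (Fin q) (Fin r) Ω}
    (hM : S.MatIn 0 M) (hN : S.MatIn 0 N) : S.MatIn 0 (M * N) := by
  intro i j
  rw [Matrix.mul_apply]
  exact Submodule.sum_mem _ fun k _ => S.mul_mem 0 0 _ (hM i k) _ (hN k j)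

lemma matIn_one {n : ℕ} : S.MatIn 0 (1 : Matrix (Fin n) (Fin n) Ω) := by
  intro i j
  rw [Matrix.one_apply]
  split
  · exact S.one_mem
  · exact Submodule.zero_mem _

lemma matD_mul₄ {a b c d e : ℕ}
    {M1 : Matrix (Fin a) (Fin b) Ω} {M2 : Matrix (Fin b) (Fin c) Ω}
    {M3 : Matrix (Fin c) (Fin d) Ω}
    (h1 : S.MatIn 0 M1) (h2 : S.MatIn 0 M2) (h3 : S.MatIn 0 M3)
    (M4 : Matrix (Fin d) (Fin e) Ω) :
    S.matD (M1 * M2 * M3 * M4)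
      = S.matD M1 * M2 * M3 * M4 + M1 * S.matD M2 * M3 * M4
        + M1 * M2 * S.matD M3 * M4 + M1 * M2 * M3 * S.matD M4 := by
  rw [S.matD_mul (S.matIn_mul (S.matIn_mul h1 h2) h3), S.matD_mul (S.matIn_mul h1 h2),
    S.matD_mul h1]
  simp only [Matrix.add_mul]
  try abel

lemma matD_mul₅ {a b c d e f : ℕ}
    {M1 : Matrix (Fin a) (Fin b) Ω} {M2 : Matrix (Fin b) (Fin c) Ω}
    {M3 : Matrix (Fin c) (Fin d) Ω} {M4 : Matrix (Fin d) (Fin e) Ω}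
    (h1 : S.MatIn 0 M1) (h2 : S.MatIn 0 M2) (h3 : S.MatIn 0 M3) (h4 : S.MatIn 0 M4)
    (M5 : Matrix (Fin e) (Fin f) Ω) :
    S.matD (M1 * M2 * M3 * M4 * M5)
      = S.matD M1 * M2 * M3 * M4 * M5 + M1 * S.matD M2 * M3 * M4 * M5
        + M1 * M2 * S.matD M3 * M4 * M5 + M1 * M2 * M3 * S.matD M4 * M5
        + M1 * M2 * M3 * M4 * S.matD M5 := by
  rw [S.matD_mul (S.matIn_mul (S.matIn_mul (S.matIn_mul h1 h2) h3) h4), S.matD_mul₄ h1 h2 h3]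
  simp only [Matrix.add_mul]
  try abel

lemma matDbar_mul₅ {a b c d e f : ℕ}
    {M1 : Matrix (Fin a) (Fin b) Ω} {M2 : Matrix (Fin b) (Fin c) Ω}
    {M3 : Matrix (Fin c) (Fin d) Ω} {M4 : Matrix (Fin d) (Fin e) Ω}
    (h1 : S.MatIn 0 M1) (h2 : S.MatIn 0 M2) (h3 : S.MatIn 0 M3) (h4 : S.MatIn 0 M4)
    (M5 : Matrix (Fin e) (Fin f) Ω) :
    S.matDbar (M1 * M2 * M3 * M4 * M5)
      = S.matDbar M1 * M2 * M3 * M4 * M5 + M1 * S.matDbar M2 * M3 * M4 * M5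
        + M1 * M2 * S.matDbar M3 * M4 * M5 + M1 * M2 * M3 * S.matDbar M4 * M5
        + M1 * M2 * M3 * M4 * S.matDbar M5 := by
  rw [S.matDbar_mul (S.matIn_mul (S.matIn_mul (S.matIn_mul h1 h2) h3) h4),
    S.matDbar_mul (S.matIn_mul (S.matIn_mul h1 h2) h3),
    S.matDbar_mul (S.matIn_mul h1 h2), S.matDbar_mul h1]
  simp only [Matrix.add_mul]
  try abel

end BidiffCalculus
namespace BidiffCalculus

variable {𝕂 : Type} [Field 𝕂] {Ω : Type} [Ring Ω] [Algebra 𝕂 Ω] (S : BidiffCalculus 𝕂 Ω)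

lemma matD_inv_u {n : ℕ} (U : (Matrix (Fin n) (Fin n) Ω)ˣ) (hU : S.MatIn 0 (Units.val U)) :
    S.matD (Units.val U⁻¹) = -(Units.val U⁻¹ * S.matD (Units.val U) * Units.val U⁻¹) := by
  have h := S.matD_mul hU (Units.val U⁻¹)
  rw [Units.mul_inv, S.matD_one] at h
  have h2 : Units.val U * S.matD (Units.val U⁻¹)
      = -(S.matD (Units.val U) * Units.val U⁻¹) := eq_neg_of_add_eq_zero_right h.symm
  calc S.matD (Units.val U⁻¹)
      = Units.val U⁻¹ * (Units.val U * S.matD (Units.val U⁻¹)) := by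
        rw [← Matrix.mul_assoc, Units.inv_mul, Matrix.one_mul]
    _ = Units.val U⁻¹ * (-(S.matD (Units.val U) * Units.val U⁻¹)) := by rw [h2]
    _ = -(Units.val U⁻¹ * S.matD (Units.val U) * Units.val U⁻¹) := by
        rw [Matrix.mul_neg, Matrix.mul_assoc]

lemma matDbar_inv_u {n : ℕ} (U : (Matrix (Fin n) (Fin n) Ω)ˣ) (hU : S.MatIn 0 (Units.val U)) :
    S.matDbar (Units.val U⁻¹) = -(Units.val U⁻¹ * S.matDbar (Units.val U) * Units.val U⁻¹) := by
  have h := S.matDbar_mul hU (Units.val U⁻¹)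
  rw [Units.mul_inv, S.matDbar_one] at h
  have h2 : Units.val U * S.matDbar (Units.val U⁻¹)
      = -(S.matDbar (Units.val U) * Units.val U⁻¹) := eq_neg_of_add_eq_zero_right h.symm
  calc S.matDbar (Units.val U⁻¹)
      = Units.val U⁻¹ * (Units.val U * S.matDbar (Units.val U⁻¹)) := by
        rw [← Matrix.mul_assoc, Units.inv_mul, Matrix.one_mul]
    _ = Units.val U⁻¹ * (-(S.matDbar (Units.val U) * Units.val U⁻¹)) := by rw [h2]
    _ = -(Units.val U⁻¹ * S.matDbar (Units.val U) * Units.val U⁻¹) := by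
        rw [Matrix.mul_neg, Matrix.mul_assoc]

end BidiffCalculus
set_option maxHeartbeats 4000000
/-- Proposition, Section 5: first-order recurrence
`d̄Φ_{i,j} = dΦ_{i,j+1} − (dΦ_{i,0}) Φ_{0,j} = dΦ_{i+1,j} + Φ_{i,0} (dΦ_{0,j})`. -/
theorem Phi_first_order_recurrence
    {𝕂 : Type} [Field 𝕂] [CharZero 𝕂] {Ω : Type} [Ring Ω] [Algebra 𝕂 Ω]
    (S : BidiffCalculus 𝕂 Ω) {m n : ℕ}
    (Δ Γ W : (Matrix (Fin n) (Fin n) Ω)ˣ)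
    (lam kap : Matrix (Fin n) (Fin n) Ω)
    (θ : Matrix (Fin m) (Fin n) Ω) (η : Matrix (Fin n) (Fin m) Ω)
    (hΔ : S.MatIn 0 (Units.val Δ)) (hΔinv : S.MatIn 0 (Units.val Δ⁻¹))
    (hΓ : S.MatIn 0 (Units.val Γ)) (hΓinv : S.MatIn 0 (Units.val Γ⁻¹))
    (hW : S.MatIn 0 (Units.val W)) (hWinv : S.MatIn 0 (Units.val W⁻¹))
    (hlam : S.MatIn 1 lam) (hkap : S.MatIn 1 kap)
    (hθ : S.MatIn 0 θ) (hη : S.MatIn 0 η)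
    (heqΔ : S.matDbar (Units.val Δ) + (lam * Units.val Δ - Units.val Δ * lam)
        = S.matD (Units.val Δ) * Units.val Δ)
    (heqlam : S.matDbar lam + lam * lam = S.matD lam * Units.val Δ)
    (heqΓ : S.matDbar (Units.val Γ) - (kap * Units.val Γ - Units.val Γ * kap)
        = Units.val Γ * S.matD (Units.val Γ))
    (heqkap : S.matDbar kap - kap * kap = Units.val Γ * S.matD kap)
    (heqθ : S.matDbar θ = S.matD θ * Units.val Δ + θ * lam)
    (heqη : S.matDbar η = Units.val Γ * S.matD η + kap * η)
    (hSyl : Units.val Γ * Units.val W - Units.val W * Units.val Δ = η * θ)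
    (heqW : S.matDbar (Units.val W) = S.matD (Units.val W) * Units.val Δ
        - S.matD (Units.val Γ) * Units.val W + kap * Units.val W + Units.val W * lam
        + S.matD η * θ) :
    ∀ i j : ℤ,
      S.matDbar (Phi θ η Δ Γ W i j)
          = S.matD (Phi θ η Δ Γ W i (j + 1))
            - S.matD (Phi θ η Δ Γ W i 0) * Phi θ η Δ Γ W 0 j
      ∧ S.matDbar (Phi θ η Δ Γ W i j)
          = S.matD (Phi θ η Δ Γ W (i + 1) j)
            + Phi θ η Δ Γ W i 0 * S.matD (Phi θ η Δ Γ W 0 j) := by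
  intro i j
  -- cancellation helpers
  have hWX : ∀ (p : ℕ) (M : Matrix (Fin n) (Fin p) Ω),
      Units.val W * (Units.val W⁻¹ * M) = M := fun p M => by
    rw [← Matrix.mul_assoc, Units.mul_inv, Matrix.one_mul]
  have hXW : ∀ (p : ℕ) (M : Matrix (Fin n) (Fin p) Ω),
      Units.val W⁻¹ * (Units.val W * M) = M := fun p M => by
    rw [← Matrix.mul_assoc, Units.inv_mul, Matrix.one_mul]
  have cΔ2 : ∀ (p : ℕ) (M : Matrix (Fin n) (Fin p) Ω),
      Units.val Δ⁻¹ * (Units.val Δ * M) = M := fun p M => by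
    rw [← Matrix.mul_assoc, Units.inv_mul, Matrix.one_mul]
  have cΓ1 : ∀ (p : ℕ) (M : Matrix (Fin n) (Fin p) Ω),
      Units.val Γ * (Units.val Γ⁻¹ * M) = M := fun p M => by
    rw [← Matrix.mul_assoc, Units.mul_inv, Matrix.one_mul]
  have cΓ2 : ∀ (p : ℕ) (M : Matrix (Fin n) (Fin p) Ω),
      Units.val Γ⁻¹ * (Units.val Γ * M) = M := fun p M => by
    rw [← Matrix.mul_assoc, Units.inv_mul, Matrix.one_mul]
  -- degree-zero-ness of integer powers
  have hA : ∀ k : ℤ, S.MatIn 0 (Units.val (Δ ^ k)) := by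
    intro k
    induction k using Int.induction_on with
    | zero => simpa using S.matIn_one
    | succ k ih => rw [zpow_add_one, Units.val_mul]; exact S.matIn_mul ih hΔ
    | pred k ih => rw [zpow_sub_one, Units.val_mul]; exact S.matIn_mul ih hΔinv
  have hB : ∀ k : ℤ, S.MatIn 0 (Units.val (Γ ^ k)) := by
    intro k
    induction k using Int.induction_on with
    | zero => simpa using S.matIn_one
    | succ k ih => rw [zpow_add_one, Units.val_mul]; exact S.matIn_mul ih hΓ
    | pred k ih => rw [zpow_sub_one, Units.val_mul]; exact S.matIn_mul ih hΓinv
  -- rearranged basic equations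
  have hdbarΔ1 : S.matDbar (Units.val Δ)
      = S.matD (Units.val Δ) * Units.val Δ + Units.val Δ * lam - lam * Units.val Δ := by
    rw [eq_sub_of_add_eq heqΔ]; abel
  have hdbarΓ1 : S.matDbar (Units.val Γ)
      = Units.val Γ * S.matD (Units.val Γ) + kap * Units.val Γ - Units.val Γ * kap := by
    rw [sub_eq_iff_eq_add.mp heqΓ]; abel
  -- derivatives of inverses
  have hDX := S.matD_inv_u W hW
  have hDbX' : S.matDbar (Units.val W⁻¹)
      = -(Units.val W⁻¹ * (S.matD (Units.val W) * Units.val Δ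
          - S.matD (Units.val Γ) * Units.val W + kap * Units.val W + Units.val W * lam
          + S.matD η * θ) * Units.val W⁻¹) := by
    rw [S.matDbar_inv_u W hW, heqW]
  have hDΔinv := S.matD_inv_u Δ hΔ
  have hDΓinv := S.matD_inv_u Γ hΓ
  have hDbΔinv : S.matDbar (Units.val Δ⁻¹)
      = -(Units.val Δ⁻¹ * S.matD (Units.val Δ)) - lam * Units.val Δ⁻¹
        + Units.val Δ⁻¹ * lam := by
    rw [S.matDbar_inv_u Δ hΔ, hdbarΔ1]
    simp only [Matrix.mul_add, Matrix.mul_sub, Matrix.add_mul, Matrix.sub_mul,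
      Matrix.mul_assoc, cΔ2, Units.mul_inv, Matrix.mul_one]
    abel
  have hDbΓinv : S.matDbar (Units.val Γ⁻¹)
      = -(S.matD (Units.val Γ) * Units.val Γ⁻¹) - Units.val Γ⁻¹ * kap
        + kap * Units.val Γ⁻¹ := by
    rw [S.matDbar_inv_u Γ hΓ, hdbarΓ1]
    simp only [Matrix.mul_add, Matrix.mul_sub, Matrix.add_mul, Matrix.sub_mul,
      Matrix.mul_assoc, cΓ2, Units.mul_inv, Matrix.mul_one]
    abel
  -- dbar of integer powers of Δ
  have hdbarA : ∀ k : ℤ, S.matDbar (Units.val (Δ ^ k))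
      = S.matD (Units.val (Δ ^ k)) * Units.val Δ + Units.val (Δ ^ k) * lam
        - lam * Units.val (Δ ^ k) := by
    intro k
    induction k using Int.induction_on with
    | zero =>
      simp only [zpow_zero, Units.val_one, S.matDbar_one, S.matD_one, Matrix.zero_mul,
        Matrix.one_mul, Matrix.mul_one]
      abel
    | succ k ih =>
      rw [zpow_add_one, Units.val_mul, S.matDbar_mul (hA k), S.matD_mul (hA k), ih, hdbarΔ1]
      simp only [Matrix.mul_add, Matrix.add_mul, Matrix.mul_sub, Matrix.sub_mul,
        Matrix.mul_assoc]
      abel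
    | pred k ih =>
      rw [zpow_sub_one, Units.val_mul, S.matDbar_mul (hA (-k)), S.matD_mul (hA (-k)), ih,
        hDbΔinv, hDΔinv]
      simp only [Matrix.mul_add, Matrix.add_mul, Matrix.mul_sub, Matrix.sub_mul,
        Matrix.mul_neg, Matrix.neg_mul, Matrix.mul_assoc, cΔ2, Units.mul_inv, Units.inv_mul,
        Matrix.mul_one, Matrix.one_mul]
      abel
  -- dbar of integer powers of Γ
  have hdbarB : ∀ k : ℤ, S.matDbar (Units.val (Γ ^ k))
      = Units.val Γ * S.matD (Units.val (Γ ^ k)) + kap * Units.val (Γ ^ k)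
        - Units.val (Γ ^ k) * kap := by
    intro k
    induction k using Int.induction_on with
    | zero =>
      simp only [zpow_zero, Units.val_one, S.matDbar_one, S.matD_one, Matrix.mul_zero,
        Matrix.one_mul, Matrix.mul_one]
      abel
    | succ k ih =>
      have hdec : (Γ : (Matrix (Fin n) (Fin n) Ω)ˣ) ^ ((k : ℤ) + 1) = Γ * Γ ^ (k : ℤ) := by
        rw [add_comm, zpow_add, zpow_one]
      rw [hdec, Units.val_mul, S.matDbar_mul hΓ, S.matD_mul hΓ, ih, hdbarΓ1]
      simp only [Matrix.mul_add, Matrix.add_mul, Matrix.mul_sub, Matrix.sub_mul,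
        Matrix.mul_assoc]
      abel
    | pred k ih =>
      have hdec : (Γ : (Matrix (Fin n) (Fin n) Ω)ˣ) ^ (-(k : ℤ) - 1)
          = Γ⁻¹ * Γ ^ (-(k : ℤ)) := by
        rw [show (-(k : ℤ) - 1) = (-1) + (-(k : ℤ)) by ring, zpow_add, zpow_neg_one]
      rw [hdec, Units.val_mul, S.matDbar_mul hΓinv, S.matD_mul hΓinv, ih, hDbΓinv, hDΓinv]
      simp only [Matrix.mul_add, Matrix.add_mul, Matrix.mul_sub, Matrix.sub_mul,
        Matrix.mul_neg, Matrix.neg_mul, Matrix.mul_assoc, cΓ1, cΓ2, Units.mul_inv,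
        Units.inv_mul, Matrix.mul_one, Matrix.one_mul]
      abel
  -- commutation of Δ with Δ^i and Γ with Γ^j
  have hcA0 : Units.val Δ * Units.val (Δ ^ i) = Units.val (Δ ^ i) * Units.val Δ := by
    have h := congrArg Units.val ((Commute.refl Δ).zpow_right i).eq
    simpa [Units.val_mul] using h
  have hcA : ∀ (p : ℕ) (M : Matrix (Fin n) (Fin p) Ω),
      Units.val Δ * (Units.val (Δ ^ i) * M) = Units.val (Δ ^ i) * (Units.val Δ * M) :=
    fun p M => by rw [← Matrix.mul_assoc, hcA0, Matrix.mul_assoc]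
  have hcB0 : Units.val Γ * Units.val (Γ ^ j) = Units.val (Γ ^ j) * Units.val Γ := by
    have h := congrArg Units.val ((Commute.refl Γ).zpow_right j).eq
    simpa [Units.val_mul] using h
  have hcB : ∀ (p : ℕ) (M : Matrix (Fin n) (Fin p) Ω),
      Units.val Γ * (Units.val (Γ ^ j) * M) = Units.val (Γ ^ j) * (Units.val Γ * M) :=
    fun p M => by rw [← Matrix.mul_assoc, hcB0, Matrix.mul_assoc]
  -- Sylvester rewriting rules
  have hWΔ : Units.val W * Units.val Δ = Units.val Γ * Units.val W - η * θ := by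
    rw [← hSyl]; abel
  have hsyl : ∀ (p : ℕ) (M : Matrix (Fin n) (Fin p) Ω),
      Units.val Δ * (Units.val W⁻¹ * M)
        = Units.val W⁻¹ * (Units.val Γ * M)
          - Units.val W⁻¹ * (η * (θ * (Units.val W⁻¹ * M))) := by
    intro p M
    calc Units.val Δ * (Units.val W⁻¹ * M)
        = Units.val W⁻¹ * (Units.val W * (Units.val Δ * (Units.val W⁻¹ * M))) :=
          (hXW _ _).symm
      _ = Units.val W⁻¹ * ((Units.val W * Units.val Δ) * (Units.val W⁻¹ * M)) := by
          rw [Matrix.mul_assoc]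
      _ = Units.val W⁻¹ * ((Units.val Γ * Units.val W - η * θ) * (Units.val W⁻¹ * M)) := by
          rw [hWΔ]
      _ = _ := by
          simp only [Matrix.sub_mul, Matrix.mul_sub, Matrix.mul_assoc, hWX]
  have hS := congrArg S.matD hSyl
  rw [S.matD_sub, S.matD_mul hΓ, S.matD_mul hW, S.matD_mul hη] at hS
  have hWDΔ : Units.val W * S.matD (Units.val Δ)
      = S.matD (Units.val Γ) * Units.val W + Units.val Γ * S.matD (Units.val W)
        - S.matD (Units.val W) * Units.val Δ - S.matD η * θ - η * S.matD θ := by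
    have h2 : Units.val W * S.matD (Units.val Δ)
        - (S.matD (Units.val Γ) * Units.val W + Units.val Γ * S.matD (Units.val W)
          - S.matD (Units.val W) * Units.val Δ - S.matD η * θ - η * S.matD θ)
        = (S.matD η * θ + η * S.matD θ)
          - (S.matD (Units.val Γ) * Units.val W + Units.val Γ * S.matD (Units.val W)
            - (S.matD (Units.val W) * Units.val Δ + Units.val W * S.matD (Units.val Δ))) := by
      abel
    rw [← hS, sub_self] at h2
    exact sub_eq_zero.mp h2
  have hdsyl : ∀ (p : ℕ) (M : Matrix (Fin n) (Fin p) Ω),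
      S.matD (Units.val Δ) * (Units.val W⁻¹ * M)
        = Units.val W⁻¹ * (S.matD (Units.val Γ) * M)
          + Units.val W⁻¹ * (Units.val Γ * (S.matD (Units.val W) * (Units.val W⁻¹ * M)))
          - Units.val W⁻¹ * (S.matD (Units.val W) * (Units.val W⁻¹ * (Units.val Γ * M)))
          + Units.val W⁻¹
              * (S.matD (Units.val W) * (Units.val W⁻¹ * (η * (θ * (Units.val W⁻¹ * M)))))
          - Units.val W⁻¹ * (S.matD η * (θ * (Units.val W⁻¹ * M)))
          - Units.val W⁻¹ * (η * (S.matD θ * (Units.val W⁻¹ * M))) := by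
    intro p M
    calc S.matD (Units.val Δ) * (Units.val W⁻¹ * M)
        = Units.val W⁻¹ * (Units.val W * (S.matD (Units.val Δ) * (Units.val W⁻¹ * M))) :=
          (hXW _ _).symm
      _ = Units.val W⁻¹ * ((Units.val W * S.matD (Units.val Δ)) * (Units.val W⁻¹ * M)) := by
          rw [Matrix.mul_assoc]
      _ = Units.val W⁻¹
            * ((S.matD (Units.val Γ) * Units.val W + Units.val Γ * S.matD (Units.val W)
              - S.matD (Units.val W) * Units.val Δ - S.matD η * θ - η * S.matD θ)
              * (Units.val W⁻¹ * M)) := by rw [hWDΔ]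
      _ = _ := by
          simp only [Matrix.sub_mul, Matrix.add_mul, Matrix.mul_sub, Matrix.mul_add,
            Matrix.mul_assoc, hWX, hsyl]
          abel
  -- presentations of the Φ's
  have hP0 : Phi θ η Δ Γ W i j
      = θ * Units.val (Δ ^ i) * Units.val W⁻¹ * Units.val (Γ ^ j) * η := rfl
  have hP1 : Phi θ η Δ Γ W i 0 = θ * Units.val (Δ ^ i) * Units.val W⁻¹ * η := by
    simp only [Phi, zpow_zero, Units.val_one, Matrix.mul_one]
  have hP2 : Phi θ η Δ Γ W 0 j = θ * Units.val W⁻¹ * Units.val (Γ ^ j) * η := by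
    simp only [Phi, zpow_zero, Units.val_one, Matrix.mul_one]
  have hP3 : Phi θ η Δ Γ W i (j + 1)
      = θ * Units.val (Δ ^ i) * Units.val W⁻¹ * (Units.val Γ * Units.val (Γ ^ j)) * η := by
    have hdec : (Γ : (Matrix (Fin n) (Fin n) Ω)ˣ) ^ (j + 1) = Γ * Γ ^ j := by
      rw [add_comm, zpow_add, zpow_one]
    simp only [Phi, hdec, Units.val_mul]
  have hP4 : Phi θ η Δ Γ W (i + 1) j
      = θ * (Units.val (Δ ^ i) * Units.val Δ) * Units.val W⁻¹ * Units.val (Γ ^ j) * η := by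
    have hdec : (Δ : (Matrix (Fin n) (Fin n) Ω)ˣ) ^ (i + 1) = Δ ^ i * Δ := by
      rw [zpow_add, zpow_one]
    simp only [Phi, hdec, Units.val_mul]
  constructor
  · -- first identity
    rw [hP0, hP3, hP1, hP2]
    rw [S.matDbar_mul₅ hθ (hA i) hWinv (hB j) η,
      S.matD_mul₅ hθ (hA i) hWinv (S.matIn_mul hΓ (hB j)) η,
      S.matD_mul hΓ (Units.val (Γ ^ j)),
      S.matD_mul₄ hθ (hA i) hWinv η]
    rw [heqθ, heqη, hdbarA i, hdbarB j, hDbX', hDX]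
    simp only [Matrix.mul_add, Matrix.add_mul, Matrix.mul_sub, Matrix.sub_mul,
      Matrix.mul_neg, Matrix.neg_mul, Matrix.mul_assoc, hWX, hXW, hcA, hcB, hsyl]
    abel
  · -- second identity
    rw [hP0, hP4, hP1, hP2]
    rw [S.matDbar_mul₅ hθ (hA i) hWinv (hB j) η,
      S.matD_mul₅ hθ (S.matIn_mul (hA i) hΔ) hWinv (hB j) η,
      S.matD_mul (hA i) (Units.val Δ),
      S.matD_mul₄ hθ hWinv (hB j) η]
    rw [heqθ, heqη, hdbarA i, hdbarB j, hDbX', hDX]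
    simp only [Matrix.mul_add, Matrix.add_mul, Matrix.mul_sub, Matrix.sub_mul,
      Matrix.mul_neg, Matrix.neg_mul, Matrix.mul_assoc, hWX, hXW, hcA, hcB, hsyl, hdsyl]
    abel
end

section
/- (Symmetry of the reduced zero curvature equation, Section 3) Let (Ω, d, d̄) be a bidifferential calculus with A = Ω^0. Let A₁ be an m×m matrix over Ω^1 with d A₁ = 0 and d̄ A₁ − A₁ A₁ = 0. Let σ and ρ be m×m matrices over A satisfying d̄σ − (A₁σ − σA₁) + σ(dσ) = dρ. Then A₁' := A₁ + dσ satisfies d A₁' = 0 and d̄ A₁' − A₁' A₁' = 0. -/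
section Aux

variable {𝕂 : Type} [Field 𝕂] {Ω : Type} [Ring Ω] [Algebra 𝕂 Ω]
variable (S : BidiffCalculus 𝕂 Ω) {m : ℕ}

lemma matD_add (M N : Matrix (Fin m) (Fin m) Ω) :
    S.matD (M + N) = S.matD M + S.matD N := by
  ext i j
  simp [BidiffCalculus.matD, Matrix.add_apply]

lemma matDbar_add (M N : Matrix (Fin m) (Fin m) Ω) :
    S.matDbar (M + N) = S.matDbar M + S.matDbar N := by
  ext i j
  simp [BidiffCalculus.matDbar, Matrix.add_apply]

lemma matD_matD (M : Matrix (Fin m) (Fin m) Ω) : S.matD (S.matD M) = 0 := by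
  ext i j
  simp [BidiffCalculus.matD, S.d_d]

lemma matD_matDbar (M : Matrix (Fin m) (Fin m) Ω) :
    S.matD (S.matDbar M) = - S.matDbar (S.matD M) := by
  ext i j
  have := S.d_dbar_anticomm (M i j)
  simp only [BidiffCalculus.matD, BidiffCalculus.matDbar, Matrix.map_apply, Matrix.neg_apply]
  exact eq_neg_of_add_eq_zero_left this

lemma matD_mul (r : ℕ) (M N : Matrix (Fin m) (Fin m) Ω) (hM : S.MatIn r M) :
    S.matD (M * N) = S.matD M * N + ((-1 : ℤ) ^ r) • (M * S.matD N) := by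
  ext i j
  simp only [BidiffCalculus.matD, Matrix.map_apply, Matrix.mul_apply, Matrix.add_apply,
    Matrix.smul_apply, map_sum]
  rw [Finset.sum_congr rfl fun k _ => S.d_leibniz r (M i k) (hM i k) (N k j),
    Finset.sum_add_distrib, Finset.smul_sum]

lemma matDbar_mul (r : ℕ) (M N : Matrix (Fin m) (Fin m) Ω) (hM : S.MatIn r M) :
    S.matDbar (M * N) = S.matDbar M * N + ((-1 : ℤ) ^ r) • (M * S.matDbar N) := by
  ext i j
  simp only [BidiffCalculus.matDbar, Matrix.map_apply, Matrix.mul_apply, Matrix.add_apply,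
    Matrix.smul_apply, map_sum]
  rw [Finset.sum_congr rfl fun k _ => S.dbar_leibniz r (M i k) (hM i k) (N k j),
    Finset.sum_add_distrib, Finset.smul_sum]

end Aux

/-- symmetry of the reduced zero curvature equation, Section 3. -/
theorem symmetry_of_zero_curvature
    {𝕂 : Type} [Field 𝕂] [CharZero 𝕂] {Ω : Type} [Ring Ω] [Algebra 𝕂 Ω]
    (S : BidiffCalculus 𝕂 Ω) {m : ℕ}
    (A₁ : Matrix (Fin m) (Fin m) Ω) (hA₁ : S.MatIn 1 A₁)
    (hdA₁ : S.matD A₁ = 0) (hF : S.matDbar A₁ - A₁ * A₁ = 0)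
    (σ ρ : Matrix (Fin m) (Fin m) Ω) (hσ : S.MatIn 0 σ) (hρ : S.MatIn 0 ρ)
    (hsym : S.matDbar σ - (A₁ * σ - σ * A₁) + σ * S.matD σ = S.matD ρ) :
    S.matD (A₁ + S.matD σ) = 0 ∧
      S.matDbar (A₁ + S.matD σ) - (A₁ + S.matD σ) * (A₁ + S.matD σ) = 0 := by
  set B := S.matD σ with hB
  have hB1 : S.MatIn 1 B := fun i j => S.d_grade 0 (σ i j) (hσ i j)
  constructor
  · rw [matD_add, hdA₁, matD_matD, add_zero]
  · -- apply matD to hsym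
    have matD_sub : ∀ M N : Matrix (Fin m) (Fin m) Ω,
        S.matD (M - N) = S.matD M - S.matD N := by
      intro M N
      ext i j
      simp [BidiffCalculus.matD, Matrix.sub_apply]
    have key : S.matDbar B = A₁ * B + B * A₁ + B * B := by
      have h1 := congrArg S.matD hsym
      rw [matD_matD] at h1
      have hAσ : S.matD (A₁ * σ) = - (A₁ * B) := by
        rw [matD_mul S 1 A₁ σ hA₁, hdA₁]
        simp [hB]
      have hσA : S.matD (σ * A₁) = B * A₁ := by
        rw [matD_mul S 0 σ A₁ hσ, hdA₁]
        simp [hB]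
      have hσB : S.matD (σ * B) = B * B := by
        rw [matD_mul S 0 σ B hσ, hB, matD_matD]
        simp
      rw [matD_add, matD_sub, matD_sub, hAσ, hσA, hσB, matD_matDbar, hB] at h1
      have h2 : - S.matDbar (S.matD σ) + (A₁ * B + B * A₁ + B * B) = 0 := by
        rw [← h1]; abel
      rw [neg_add_eq_zero] at h2
      rw [hB]; exact h2
    have hbarA : S.matDbar A₁ = A₁ * A₁ := by
      rwa [sub_eq_zero] at hF
    rw [matDbar_add, hbarA, key]
    noncomm_ring
end

section
/- (Bäcklund transformation for equation (2), Section 3.1, case 1) Let (Ω, d, d̄) be a bidifferential calculus with A = Ω^0. Let φ, φ', C be m×m matrices over A such that φ solves d d̄ φ + (dφ)(dφ) = 0, d C = 0, and the Bäcklund relation d̄(φ' − φ + C) = (dφ)(φ' − φ + C) − (φ' − φ + C)(dφ') holds. Then φ' also solves d d̄ φ' + (dφ')(dφ') = 0. -/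
section Aux

variable {𝕂 : Type} [Field 𝕂] {Ω : Type} [Ring Ω] [Algebra 𝕂 Ω]
variable (S : BidiffCalculus 𝕂 Ω) {m : ℕ}

lemma matD_sub (M N : Matrix (Fin m) (Fin m) Ω) :
    S.matD (M - N) = S.matD M - S.matD N := by
  ext i j; simp [BidiffCalculus.matD, Matrix.map_apply]

lemma matDbar_sub (M N : Matrix (Fin m) (Fin m) Ω) :
    S.matDbar (M - N) = S.matDbar M - S.matDbar N := by
  ext i j; simp [BidiffCalculus.matDbar, Matrix.map_apply]

lemma matIn_d (M : Matrix (Fin m) (Fin m) Ω) (hM : S.MatIn 0 M) :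
    S.MatIn 1 (S.matD M) := fun i j => S.d_grade 0 (M i j) (hM i j)

end Aux

/-- Bäcklund transformation for equation (2), Section 3.1, case 1. -/
theorem backlund_phi
    {𝕂 : Type} [Field 𝕂] [CharZero 𝕂] {Ω : Type} [Ring Ω] [Algebra 𝕂 Ω]
    (S : BidiffCalculus 𝕂 Ω) {m : ℕ}
    (φ φ' C : Matrix (Fin m) (Fin m) Ω)
    (hφ0 : S.MatIn 0 φ) (hφ'0 : S.MatIn 0 φ') (hC0 : S.MatIn 0 C)
    (hφ : S.matD (S.matDbar φ) + S.matD φ * S.matD φ = 0)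
    (hC : S.matD C = 0)
    (hB : S.matDbar (φ' - φ + C)
        = S.matD φ * (φ' - φ + C) - (φ' - φ + C) * S.matD φ') :
    S.matD (S.matDbar φ') + S.matD φ' * S.matD φ' = 0 := by
  set B : Matrix (Fin m) (Fin m) Ω := φ' - φ + C with hBdef
  have hB0 : S.MatIn 0 B := by
    intro i j
    simp only [hBdef, Matrix.add_apply, Matrix.sub_apply]
    exact add_mem (sub_mem (hφ'0 i j) (hφ0 i j)) (hC0 i j)
  have hdB : S.matD B = S.matD φ' - S.matD φ := by
    rw [hBdef, matD_add, matD_sub, hC, add_zero]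
  have key := congrArg S.matD hB
  rw [matD_sub, matD_mul S 1 _ _ (matIn_d S φ hφ0), matD_matD,
    matD_mul S 0 _ _ hB0, matD_matD, matDbar_add, matDbar_sub, matD_add, matD_sub,
    matD_matDbar S C] at key
  have hdC0 : S.matD C = 0 := hC
  have hdbardC : S.matDbar (S.matD C) = 0 := by
    rw [hdC0]; ext i j; simp [BidiffCalculus.matDbar, Matrix.map_apply]
  rw [hdbardC, hdB] at key
  simp only [pow_one, pow_zero, one_smul, neg_smul, neg_zero, add_zero,
    zero_mul, mul_zero, smul_zero] at key
  -- key : d d̄ φ' - d d̄ φ = (0 - dφ * (dφ' - dφ)) - ((dφ' - dφ) * dφ' + 0)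
  have hφ' : S.matD (S.matDbar φ) = - (S.matD φ * S.matD φ) :=
    eq_neg_of_add_eq_zero_left hφ
  have : S.matD (S.matDbar φ') + S.matD φ' * S.matD φ' =
      (S.matD (S.matDbar φ') - S.matD (S.matDbar φ))
        + S.matD (S.matDbar φ) + S.matD φ' * S.matD φ' := by abel
  rw [this, key, hφ']
  noncomm_ring
end

section
/- (Bäcklund transformation for equation (3), Section 3.1, case 2) Let (Ω, d, d̄) be a bidifferential calculus with A = Ω^0. Let g, g' be invertible m×m matrices over A and K an m×m matrix over A such that g solves d[(d̄g) g^{-1}] = 0, d̄ K = 0, and the Bäcklund relation (d̄g') g'^{-1} − (d̄g) g^{-1} = d(g K g'^{-1}) holds. Then g' also solves d[(d̄g') g'^{-1}] = 0. -/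
/-- Bäcklund transformation for equation (3), Section 3.1, case 2. -/
theorem backlund_g
    {𝕂 : Type} [Field 𝕂] [CharZero 𝕂] {Ω : Type} [Ring Ω] [Algebra 𝕂 Ω]
    (S : BidiffCalculus 𝕂 Ω) {m : ℕ}
    (g g' : (Matrix (Fin m) (Fin m) Ω)ˣ) (K : Matrix (Fin m) (Fin m) Ω)
    (hg0 : S.MatIn 0 (Units.val g)) (hginv0 : S.MatIn 0 (Units.val g⁻¹))
    (hg'0 : S.MatIn 0 (Units.val g')) (hg'inv0 : S.MatIn 0 (Units.val g'⁻¹))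
    (hK0 : S.MatIn 0 K)
    (hg : S.matD (S.matDbar (Units.val g) * Units.val g⁻¹) = 0)
    (hK : S.matDbar K = 0)
    (hB : S.matDbar (Units.val g') * Units.val g'⁻¹
          - S.matDbar (Units.val g) * Units.val g⁻¹
        = S.matD (Units.val g * K * Units.val g'⁻¹)) :
    S.matD (S.matDbar (Units.val g') * Units.val g'⁻¹) = 0 := by
  have h := congrArg S.matD hB
  have hsub : ∀ (X Y : Matrix (Fin m) (Fin m) Ω), S.matD (X - Y) = S.matD X - S.matD Y := by
    intro X Y
    ext i j
    simp only [BidiffCalculus.matD, Matrix.map_apply, Matrix.sub_apply, map_sub]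
  have hdd : S.matD (S.matD (Units.val g * K * Units.val g'⁻¹)) = 0 := by
    ext i j
    simp only [BidiffCalculus.matD, Matrix.map_apply, Matrix.zero_apply, S.d_d]
  rw [hsub, hg, hdd] at h
  rwa [sub_zero] at h
end

section
/- (Miura-type relation (4) has (2) and (3) as integrability conditions) Let (Ω, d, d̄) be a bidifferential calculus with A = Ω^0. Let φ be an m×m matrix over A and g an invertible m×m matrix over A such that d̄ g = (dφ) g. Then φ solves d d̄ φ + (dφ)(dφ) = 0 and g solves d[(d̄g) g^{-1}] = 0. -/
namespace BidiffCalculus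

theorem matDbar_mul_s13 {𝕂 : Type} [Field 𝕂] {Ω : Type} [Ring Ω] [Algebra 𝕂 Ω]
    (S : BidiffCalculus 𝕂 Ω) {m n p : ℕ} (r : ℕ)
    (A : Matrix (Fin m) (Fin n) Ω) (B : Matrix (Fin n) (Fin p) Ω) (hA : S.MatIn r A) :
    S.matDbar (A * B) = S.matDbar A * B + ((-1 : ℤ) ^ r) • (A * S.matDbar B) := by
  ext i j
  simp only [matDbar, Matrix.map_apply, Matrix.add_apply, Matrix.smul_apply,
    Matrix.mul_apply, map_sum, Finset.smul_sum, ← Finset.sum_add_distrib]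
  exact Finset.sum_congr rfl fun k _ => S.dbar_leibniz r (A i k) (hA i k) (B k j)

end BidiffCalculus

/-- the Miura-type relation (4) has (2) and (3) as integrability
conditions. -/
theorem miura_integrability
    {𝕂 : Type} [Field 𝕂] [CharZero 𝕂] {Ω : Type} [Ring Ω] [Algebra 𝕂 Ω]
    (S : BidiffCalculus 𝕂 Ω) {m : ℕ}
    (φ : Matrix (Fin m) (Fin m) Ω) (g : (Matrix (Fin m) (Fin m) Ω)ˣ)
    (hφ0 : S.MatIn 0 φ)
    (hg0 : S.MatIn 0 (Units.val g)) (hginv0 : S.MatIn 0 (Units.val g⁻¹))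
    (hMiura : S.matDbar (Units.val g) = S.matD φ * Units.val g) :
    S.matD (S.matDbar φ) + S.matD φ * S.matD φ = 0 ∧
      S.matD (S.matDbar (Units.val g) * Units.val g⁻¹) = 0 := by
  -- degree of dφ is 1
  have hdφ1 : S.MatIn 1 (S.matD φ) := fun i j => S.d_grade 0 (φ i j) (hφ0 i j)
  -- d̄ d̄ g = 0 entrywise
  have hdd : S.matDbar (S.matDbar (Units.val g)) = 0 := by
    ext i j
    simp [BidiffCalculus.matDbar, S.dbar_dbar]
  rw [hMiura, S.matDbar_mul_s13 1 (S.matD φ) (Units.val g) hdφ1, hMiura] at hdd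
  -- d̄ (d φ) = - d (d̄ φ) entrywise
  have hanti : S.matDbar (S.matD φ) = - S.matD (S.matDbar φ) := by
    ext i j
    have := S.d_dbar_anticomm (φ i j)
    simp only [BidiffCalculus.matDbar, BidiffCalculus.matD, Matrix.map_apply,
      Matrix.neg_apply]
    exact eq_neg_of_add_eq_zero_right this
  rw [hanti] at hdd
  have hkey : (S.matD (S.matDbar φ) + S.matD φ * S.matD φ) * Units.val g = 0 := by
    have : (-1 : ℤ) ^ 1 • (S.matD φ * (S.matD φ * Units.val g))
        = -(S.matD φ * S.matD φ * Units.val g) := by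
      simp [mul_assoc]
    rw [this, neg_mul, ← neg_add, neg_eq_zero] at hdd
    rw [add_mul, mul_assoc, ← mul_assoc]
    exact hdd
  have h1 : S.matD (S.matDbar φ) + S.matD φ * S.matD φ = 0 := by
    have h2 := congrArg (fun M => M * Units.val g⁻¹) hkey
    simp only [zero_mul, mul_assoc] at h2
    rwa [Units.mul_inv, mul_one] at h2
  refine ⟨h1, ?_⟩
  rw [hMiura, mul_assoc, Units.mul_inv, mul_one]
  ext i j
  simp [BidiffCalculus.matD, S.d_d]
end

section
/- (Integrability of the reduced zero curvature equation, Section 2.1) Let (Ω, d, d̄) be a bidifferential calculus with A = Ω^0. Let A₁ be an m×m matrix over Ω^1, Δ an n×n matrix over A and λ an n×n matrix over Ω^1 satisfying d̄Δ + [λ,Δ] = (dΔ)Δ and d̄λ + λ² = (dλ)Δ. If θ is an m×n matrix over A satisfying the linear system d̄θ = A₁θ + (dθ)Δ + θλ, then F_{d̄}[A₁]·θ − (dA₁)·θ·Δ = 0, where F_{d̄}[A₁] := d̄A₁ − A₁A₁. -/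
namespace BidiffCalculus

variable {𝕂 : Type} [Field 𝕂] {Ω : Type} [Ring Ω] [Algebra 𝕂 Ω] (S : BidiffCalculus 𝕂 Ω)

lemma matD_add {m n : ℕ} (M N : Matrix (Fin m) (Fin n) Ω) :
    S.matD (M + N) = S.matD M + S.matD N := by
  ext i j; simp [matD]

lemma matDbar_add {m n : ℕ} (M N : Matrix (Fin m) (Fin n) Ω) :
    S.matDbar (M + N) = S.matDbar M + S.matDbar N := by
  ext i j; simp [matDbar]

lemma matD_mul0 {m n p : ℕ} {M : Matrix (Fin m) (Fin n) Ω} (hM : S.MatIn 0 M)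
    (N : Matrix (Fin n) (Fin p) Ω) :
    S.matD (M * N) = S.matD M * N + M * S.matD N := by
  ext i j
  simp only [matD, Matrix.map_apply, Matrix.mul_apply, Matrix.add_apply, map_sum,
    ← Finset.sum_add_distrib]
  refine Finset.sum_congr rfl fun k _ => ?_
  rw [S.d_leibniz 0 _ (hM i k), pow_zero, one_smul]

lemma matD_mul1 {m n p : ℕ} {M : Matrix (Fin m) (Fin n) Ω} (hM : S.MatIn 1 M)
    (N : Matrix (Fin n) (Fin p) Ω) :
    S.matD (M * N) = S.matD M * N - M * S.matD N := by
  ext i j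
  simp only [matD, Matrix.map_apply, Matrix.mul_apply, Matrix.sub_apply, map_sum,
    ← Finset.sum_sub_distrib]
  refine Finset.sum_congr rfl fun k _ => ?_
  rw [S.d_leibniz 1 _ (hM i k), pow_one, neg_one_zsmul, sub_eq_add_neg]

lemma matDbar_mul0 {m n p : ℕ} {M : Matrix (Fin m) (Fin n) Ω} (hM : S.MatIn 0 M)
    (N : Matrix (Fin n) (Fin p) Ω) :
    S.matDbar (M * N) = S.matDbar M * N + M * S.matDbar N := by
  ext i j
  simp only [matDbar, Matrix.map_apply, Matrix.mul_apply, Matrix.add_apply, map_sum,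
    ← Finset.sum_add_distrib]
  refine Finset.sum_congr rfl fun k _ => ?_
  rw [S.dbar_leibniz 0 _ (hM i k), pow_zero, one_smul]

lemma matDbar_mul1 {m n p : ℕ} {M : Matrix (Fin m) (Fin n) Ω} (hM : S.MatIn 1 M)
    (N : Matrix (Fin n) (Fin p) Ω) :
    S.matDbar (M * N) = S.matDbar M * N - M * S.matDbar N := by
  ext i j
  simp only [matDbar, Matrix.map_apply, Matrix.mul_apply, Matrix.sub_apply, map_sum,
    ← Finset.sum_sub_distrib]
  refine Finset.sum_congr rfl fun k _ => ?_
  rw [S.dbar_leibniz 1 _ (hM i k), pow_one, neg_one_zsmul, sub_eq_add_neg]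

lemma matD_matD {m n : ℕ} (M : Matrix (Fin m) (Fin n) Ω) : S.matD (S.matD M) = 0 := by
  ext i j; simp [matD, S.d_d]

lemma matDbar_matDbar {m n : ℕ} (M : Matrix (Fin m) (Fin n) Ω) :
    S.matDbar (S.matDbar M) = 0 := by
  ext i j; simp [matDbar, S.dbar_dbar]

lemma matDbar_matD {m n : ℕ} (M : Matrix (Fin m) (Fin n) Ω) :
    S.matDbar (S.matD M) = - S.matD (S.matDbar M) := by
  ext i j
  simp only [matD, matDbar, Matrix.map_apply, Matrix.neg_apply]
  exact eq_neg_of_add_eq_zero_right (S.d_dbar_anticomm (M i j))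

end BidiffCalculus

/-- integrability of the reduced zero curvature equation,
Section 2.1. -/
theorem linear_system_integrability
    {𝕂 : Type} [Field 𝕂] [CharZero 𝕂] {Ω : Type} [Ring Ω] [Algebra 𝕂 Ω]
    (S : BidiffCalculus 𝕂 Ω) {m n : ℕ}
    (A₁ : Matrix (Fin m) (Fin m) Ω) (hA₁ : S.MatIn 1 A₁)
    (Δ : Matrix (Fin n) (Fin n) Ω) (lam : Matrix (Fin n) (Fin n) Ω)
    (hΔ0 : S.MatIn 0 Δ) (hlam1 : S.MatIn 1 lam)
    (heqΔ : S.matDbar Δ + (lam * Δ - Δ * lam) = S.matD Δ * Δ)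
    (heqlam : S.matDbar lam + lam * lam = S.matD lam * Δ)
    (θ : Matrix (Fin m) (Fin n) Ω) (hθ0 : S.MatIn 0 θ)
    (hlin : S.matDbar θ = A₁ * θ + S.matD θ * Δ + θ * lam) :
    (S.matDbar A₁ - A₁ * A₁) * θ - S.matD A₁ * θ * Δ = 0 := by
  have hdθ1 : S.MatIn 1 (S.matD θ) := fun i j => S.d_grade 0 _ (hθ0 i j)
  have hdbarΔ : S.matDbar Δ = S.matD Δ * Δ - (lam * Δ - Δ * lam) := by
    rw [← heqΔ]; abel
  have hdbarlam : S.matDbar lam = S.matD lam * Δ - lam * lam := by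
    rw [← heqlam]; abel
  have h0 : (0 : Matrix (Fin m) (Fin n) Ω) = S.matDbar (S.matDbar θ) :=
    (S.matDbar_matDbar θ).symm
  rw [hlin, S.matDbar_add, S.matDbar_add, S.matDbar_mul1 hA₁, S.matDbar_mul1 hdθ1,
    S.matDbar_mul0 hθ0, S.matDbar_matD, hlin, hdbarΔ, hdbarlam,
    S.matD_add, S.matD_add, S.matD_mul1 hA₁, S.matD_mul1 hdθ1, S.matD_mul0 hθ0,
    S.matD_matD] at h0
  rw [eq_comm] at h0
  rw [← h0]
  simp only [Matrix.mul_add, Matrix.add_mul, Matrix.mul_sub, Matrix.sub_mul,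
    Matrix.neg_mul, Matrix.mul_neg, Matrix.mul_assoc, Matrix.zero_mul, Matrix.mul_zero]
  abel
end
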